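/- Let f(n) = √(2n) + (1/6)·log n. There is a constant C such that for every D > 0 and all integers n ≥ 1 and 1 ≤ k ≤ D√n, one has | Σ_{i=1}^{k-1} (f(n) − f(n−i)) − [ (k−1)k/(2√(2n)) + (k−1)k(2k−1)/(24n√(2n)) + (k−1)k/(12n) ] | ≤ C(D)·n^{−1/2}, where C(D) depends only on D. -/

import Mathlib

/-!
Put `x = i / n`. Since `√(2(n - i)) = √(2n) · √(1 - x)` and `log (n - i) = log n + log (1 - x)`, the
Taylor expansions of `√(1 - x)` and `log (1 - x)` give each increment `f n - f (n - i)` up to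
`O(√n · x³ + x²)` as long as `x ≤ 1/2`; summing over `i < k ≤ D√n` costs `O_D(n^{-1/2})`, and the
main terms sum to the closed form by the formulas for `∑ i` and `∑ i²`. When `n < 2k`, the bound
`k ≤ D√n` forces `n ≤ 4D²`, and crude bounds suffice.
-/

open Finset

noncomputable def f (n : ℕ) : ℝ := Real.sqrt (2 * n) + (1 / 6) * Real.log n

lemma abs_one_sub_sqrt_one_sub_sub_le {x : ℝ} (hx0 : 0 ≤ x) (hx1 : x ≤ 1) :
    |1 - √(1 - x) - (x / 2 + x ^ 2 / 8)| ≤ 3 / 8 * x ^ 3 := by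
  have hy0 := Real.sqrt_nonneg (1 - x)
  have upper : √(1 - x) ≤ 1 - x / 2 - x ^ 2 / 8 :=
    Real.sqrt_le_iff.2 ⟨by nlinarith, by nlinarith⟩
  have lower : 1 - x / 2 - x ^ 2 / 8 - 3 / 8 * x ^ 3 ≤ √(1 - x) := by
    rcases le_or_gt (1 - x / 2 - x ^ 2 / 8 - 3 / 8 * x ^ 3) 0 with h | h
    · exact h.trans hy0
    · have := pow_nonneg hx0 3
      exact Real.le_sqrt_of_sq_le (by nlinarith [pow_nonneg hx0 4, pow_nonneg hx0 5])
  rw [abs_le]; constructor <;> nlinarith [pow_nonneg hx0 3]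

lemma abs_sqrt_sub_sqrt_sub_le {a t : ℝ} (ha : 0 < a) (ht0 : 0 ≤ t) (hta : t ≤ a) :
    |√a - √(a - t) - (t / (2 * √a) + t ^ 2 / (8 * a * √a))| ≤ 3 / 8 * √a * (t / a) ^ 3 := by
  set x := t / a with hx
  have hsa : 0 < √a := Real.sqrt_pos.2 ha
  have hta' : t = a * x := by rw [hx]; field_simp
  have hsplit : √(a - t) = √a * √(1 - x) := by
    rw [← Real.sqrt_mul ha.le, hta']; ring_nf
  have hexpr : √a - √(a - t) - (t / (2 * √a) + t ^ 2 / (8 * a * √a))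
      = √a * (1 - √(1 - x) - (x / 2 + x ^ 2 / 8)) := by
    rw [hsplit, hta']; field_simp
    rw [Real.sq_sqrt ha.le]; ring
  have hx1 : x ≤ 1 := by rw [hx, div_le_one ha]; exact hta
  rw [hexpr, abs_mul, abs_of_pos hsa]
  have := mul_le_mul_of_nonneg_left (abs_one_sub_sqrt_one_sub_sub_le (by positivity) hx1) hsa.le
  linarith

lemma abs_log_sub_log_sub_le {a t : ℝ} (ha : 0 < a) (ht0 : 0 ≤ t) (hta : 2 * t ≤ a) :
    |Real.log a - Real.log (a - t) - t / a| ≤ 2 * (t / a) ^ 2 := by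
  set x := t / a with hx
  have hx0 : 0 ≤ x := by positivity
  have hx1 : x ≤ 1 / 2 := by rw [hx, div_le_iff₀ ha]; linarith
  have hlog : Real.log (a - t) = Real.log a + Real.log (1 - x) := by
    rw [← Real.log_mul ha.ne' (by linarith)]; congr 1; rw [hx]; field_simp
  have key := Real.abs_log_sub_add_sum_range_le (x := x) (by rw [abs_of_nonneg hx0]; linarith) 1
  simp only [range_one, sum_singleton, zero_add, pow_one, Nat.cast_zero, div_one,
    one_add_one_eq_two, abs_of_nonneg hx0] at key
  rw [hlog, show Real.log a - (Real.log a + Real.log (1 - x)) - x = -(x + Real.log (1 - x)) by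
    ring, abs_neg]
  refine key.trans ?_
  rw [div_le_iff₀ (by linarith)]
  nlinarith

noncomputable def fDiffApprox (n i : ℕ) : ℝ :=
  i / √(2 * n) + (i : ℝ) ^ 2 / (4 * n * √(2 * n)) + i / (6 * n)

lemma abs_f_sub_f_sub_fDiffApprox_le {n i : ℕ} (hn : 0 < n) (hi : 2 * i ≤ n) :
    |f n - f (n - i) - fDiffApprox n i|
      ≤ 3 / 8 * √(2 * n) * ((i : ℝ) / n) ^ 3 + 1 / 3 * ((i : ℝ) / n) ^ 2 := by
  have hnR : (0 : ℝ) < n := by exact_mod_cast hn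
  have hiR : (2 * i : ℝ) ≤ n := by exact_mod_cast hi
  have hsqrt := abs_sqrt_sub_sqrt_sub_le (a := 2 * n) (t := 2 * i) (by positivity) (by positivity)
    (by linarith)
  have hlog := abs_log_sub_log_sub_le (a := n) (t := i) hnR (by positivity) hiR
  have hratio : (2 * i : ℝ) / (2 * n) = i / n := mul_div_mul_left _ _ two_ne_zero
  rw [hratio] at hsqrt
  have hsplit : f n - f (n - i) - fDiffApprox n i
      = (√(2 * n) - √(2 * n - 2 * i)
          - (2 * i / (2 * √(2 * n)) + (2 * i) ^ 2 / (8 * (2 * n) * √(2 * n))))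
        + 1 / 6 * (Real.log n - Real.log (n - i) - i / n) := by
    rw [f, f, fDiffApprox, Nat.cast_sub (by omega), mul_sub]
    field_simp
    ring
  rw [hsplit]
  refine (abs_add_le _ _).trans ?_
  rw [abs_mul, abs_of_pos (by norm_num : (0 : ℝ) < 1 / 6)]
  linarith

lemma f_nonneg (n : ℕ) : 0 ≤ f n := by
  unfold f; positivity

lemma f_le (n : ℕ) : f n ≤ 3 * n := by
  have hn : (n : ℝ) ≤ n ^ 2 := by exact_mod_cast Nat.le_self_pow two_ne_zero n
  have hsqrt : √(2 * n) ≤ 2 * n := Real.sqrt_le_iff.2 ⟨by positivity, by nlinarith⟩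
  have hlog := Real.log_le_self (Nat.cast_nonneg (α := ℝ) n)
  unfold f; linarith

lemma f_monotone : Monotone f := by
  intro a b h
  have hab : (a : ℝ) ≤ b := by exact_mod_cast h
  have hsqrt : √(2 * a) ≤ √(2 * b) := Real.sqrt_le_sqrt (by linarith)
  have hlog : Real.log a ≤ Real.log b := by
    rcases a.eq_zero_or_pos with rfl | ha
    · simpa using Real.log_natCast_nonneg b
    · exact Real.log_le_log (by positivity) hab
  unfold f; linarith

lemma fDiffApprox_nonneg (n i : ℕ) : 0 ≤ fDiffApprox n i := by
  unfold fDiffApprox; positivity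

lemma fDiffApprox_le {n : ℕ} (hn : 0 < n) (i : ℕ) : fDiffApprox n i ≤ 2 * i + (i : ℝ) ^ 2 := by
  have hnR : (1 : ℝ) ≤ n := by exact_mod_cast hn
  have hsqrt : 1 ≤ √(2 * n) := Real.one_le_sqrt.2 (by linarith)
  have h1 := div_le_self (Nat.cast_nonneg (α := ℝ) i) hsqrt
  have h2 := div_le_self (sq_nonneg (i : ℝ)) (show 1 ≤ 4 * n * √(2 * n) by nlinarith)
  have h3 := div_le_self (Nat.cast_nonneg (α := ℝ) i) (show 1 ≤ 6 * (n : ℝ) by linarith)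
  unfold fDiffApprox; linarith

lemma sum_Icc_id_cast (m : ℕ) : ∑ i ∈ Icc 1 m, (i : ℝ) = m * (m + 1) / 2 := by
  induction m with
  | zero => simp
  | succ m ih => rw [sum_Icc_succ_top (by omega), ih]; push_cast; ring

lemma sum_Icc_sq_cast (m : ℕ) : ∑ i ∈ Icc 1 m, (i : ℝ) ^ 2 = m * (m + 1) * (2 * m + 1) / 6 := by
  induction m with
  | zero => simp
  | succ m ih => rw [sum_Icc_succ_top (by omega), ih]; push_cast; ring

lemma sum_fDiffApprox (n k : ℕ) :
    ∑ i ∈ Icc 1 (k - 1), fDiffApprox n i =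
      ((k : ℝ) - 1) * k / (2 * Real.sqrt (2 * n))
        + ((k : ℝ) - 1) * k * (2 * k - 1) / (24 * n * Real.sqrt (2 * n))
        + ((k : ℝ) - 1) * k / (12 * n) := by
  rcases k with _ | k
  · simp
  simp only [fDiffApprox, sum_add_distrib, ← sum_div, Nat.add_sub_cancel, sum_Icc_id_cast,
    sum_Icc_sq_cast]
  push_cast
  ring

lemma abs_sum_le_card_mul {ι : Type*} {s : Finset ι} {g : ι → ℝ} {b : ℝ}
    (h : ∀ i ∈ s, |g i| ≤ b) : |∑ i ∈ s, g i| ≤ #s * b :=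
  (abs_sum_le_sum_abs _ _).trans <| (sum_le_card_nsmul _ _ _ h).trans_eq (nsmul_eq_mul _ _)

lemma abs_sum_f_sub_f_sub_fDiffApprox_le_of_two_mul_le {D : ℝ} {n k : ℕ} (hD : 0 ≤ D)
    (hn : 0 < n) (hkn : 2 * (k - 1) ≤ n) (hkD : (k : ℝ) ≤ D * √n) :
    |∑ i ∈ Icc 1 (k - 1), (f n - f (n - i) - fDiffApprox n i)|
      ≤ (3 / 4 * D ^ 4 + 1 / 3 * D ^ 3) / √n := by
  have hnR : (0 : ℝ) < n := by exact_mod_cast hn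
  have hs : 0 < √n := Real.sqrt_pos.2 hnR
  have hss : √n * √n = n := Real.mul_self_sqrt hnR.le
  have hsqrt2 : √(2 * n) ≤ 2 * √n := by
    rw [Real.sqrt_mul zero_le_two]; gcongr
    exact Real.sqrt_le_iff.2 ⟨zero_le_two, by norm_num⟩
  have hkn' : (k : ℝ) / n ≤ D / √n := by
    rw [div_le_div_iff₀ hnR hs]; nlinarith [mul_le_mul_of_nonneg_right hkD hs.le]
  have hterm : ∀ i ∈ Icc 1 (k - 1), |f n - f (n - i) - fDiffApprox n i|
      ≤ 3 / 8 * (2 * √n) * (D / √n) ^ 3 + 1 / 3 * (D / √n) ^ 2 := by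
    intro i hi
    rw [mem_Icc] at hi
    have hik : (i : ℝ) / n ≤ D / √n :=
      le_trans (by gcongr; exact_mod_cast (by omega : i ≤ k)) hkn'
    refine (abs_f_sub_f_sub_fDiffApprox_le hn (by omega)).trans ?_
    gcongr
  have hcard : ((k - 1 : ℕ) : ℝ) ≤ D * √n :=
    le_trans (by exact_mod_cast Nat.sub_le k 1) hkD
  calc _ ≤ ((k - 1 : ℕ) : ℝ) * (3 / 8 * (2 * √n) * (D / √n) ^ 3 + 1 / 3 * (D / √n) ^ 2) := by
        simpa using abs_sum_le_card_mul hterm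
    _ ≤ D * √n * (3 / 8 * (2 * √n) * (D / √n) ^ 3 + 1 / 3 * (D / √n) ^ 2) := by gcongr
    _ = (3 / 4 * D ^ 4 + 1 / 3 * D ^ 3) / √n := by field_simp; ring

lemma abs_sum_f_sub_f_sub_fDiffApprox_le_of_lt {D : ℝ} {n k : ℕ} (hD : 0 ≤ D)
    (hn : 0 < n) (hnk : n < 2 * k) (hkD : (k : ℝ) ≤ D * √n) :
    |∑ i ∈ Icc 1 (k - 1), (f n - f (n - i) - fDiffApprox n i)|
      ≤ 16 * D ^ 5 * (3 + D ^ 2) / √n := by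
  have hnR : (1 : ℝ) ≤ n := by exact_mod_cast hn
  have hs : 1 ≤ √n := Real.one_le_sqrt.2 hnR
  have hss : √n * √n = n := Real.mul_self_sqrt (by linarith)
  have hnkR : (n : ℝ) < 2 * k := by exact_mod_cast hnk
  have hsD : √n ≤ 2 * D := by nlinarith
  have hnD : (n : ℝ) ≤ 4 * D ^ 2 := by nlinarith
  have hkD' : (k : ℝ) ≤ 2 * D ^ 2 := by nlinarith
  have hterm : ∀ i ∈ Icc 1 (k - 1),
      |f n - f (n - i) - fDiffApprox n i| ≤ 4 * D ^ 2 * (3 + D ^ 2) := by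
    intro i hi
    rw [mem_Icc] at hi
    have hik : (i : ℝ) ≤ 2 * D ^ 2 := le_trans (by exact_mod_cast (by omega : i ≤ k)) hkD'
    refine abs_sub_le_of_nonneg_of_le (sub_nonneg.2 (f_monotone (n.sub_le i))) ?_
      (fDiffApprox_nonneg n i) ((fDiffApprox_le hn i).trans ?_)
    · nlinarith [f_nonneg (n - i), f_le n, pow_nonneg hD 4]
    · nlinarith
  have hcard : ((k - 1 : ℕ) : ℝ) ≤ 2 * D ^ 2 :=
    le_trans (by exact_mod_cast Nat.sub_le k 1) hkD'
  calc _ ≤ ((k - 1 : ℕ) : ℝ) * (4 * D ^ 2 * (3 + D ^ 2)) := by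
        simpa using abs_sum_le_card_mul hterm
    _ ≤ 2 * D ^ 2 * (4 * D ^ 2 * (3 + D ^ 2)) := by gcongr
    _ ≤ 2 * D ^ 2 * (4 * D ^ 2 * (3 + D ^ 2)) * (2 * D / √n) := by
        refine le_mul_of_one_le_right (by positivity) ?_
        rw [le_div_iff₀ (by linarith)]; linarith
    _ = 16 * D ^ 5 * (3 + D ^ 2) / √n := by ring

theorem stmt_11 :
    ∀ D : ℝ, 0 < D → ∃ C : ℝ, 0 < C ∧
      ∀ n k : ℕ, 1 ≤ n → 1 ≤ k → (k : ℝ) ≤ D * Real.sqrt n →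
        |(∑ i ∈ Finset.Icc 1 (k - 1), (f n - f (n - i))) -
          (((k : ℝ) - 1) * k / (2 * Real.sqrt (2 * n))
            + ((k : ℝ) - 1) * k * (2 * k - 1) / (24 * n * Real.sqrt (2 * n))
            + ((k : ℝ) - 1) * k / (12 * n))| ≤ C / Real.sqrt n := by
  intro D hD
  refine ⟨(3 / 4 * D ^ 4 + 1 / 3 * D ^ 3) + 16 * D ^ 5 * (3 + D ^ 2), by positivity, ?_⟩
  intro n k hn _ hkD
  have hs : 0 ≤ √(n : ℝ) := Real.sqrt_nonneg n
  rw [← sum_fDiffApprox, ← sum_sub_distrib]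
  rcases le_or_gt (2 * (k - 1)) n with hkn | hnk
  · refine (abs_sum_f_sub_f_sub_fDiffApprox_le_of_two_mul_le hD.le hn hkn hkD).trans ?_
    exact div_le_div_of_nonneg_right (le_add_of_nonneg_right (by positivity)) hs
  · refine (abs_sum_f_sub_f_sub_fDiffApprox_le_of_lt hD.le hn (by omega) hkD).trans ?_
    exact div_le_div_of_nonneg_right (le_add_of_nonneg_left (by positivity)) hs
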